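/- arXiv:2206.15364 — 3 statements merged into one kernel-verified Lean document; each statement's English description precedes it below -/
import Mathlib

section
/- Assume M is geodesic and let x = ((t_1,p_1),…,(t_n,p_n)) and x̂ = ((t̂_1,p̂_1),…,(t̂_n,p̂_n)) be request sequences of the same length n. Then |Z(x) − Z(x̂)| ≤ ε_time + 2·ε_pos. (Combined content of the paper's two lemmas underlying the Theorem that the LAR-Trust algorithm has competitive ratio 1 + (2 ε_time + 4 ε_pos)/Z^OPT: the optimal offline completion times of the actual and the predicted instance differ by at most ε_time + 2 ε_pos.) -/
/-- A schedule of a unit-speed server: a 1-Lipschitz map that stays at the origin `o`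
at all times `≤ 0`. -/
def IsSchedule {M : Type*} [MetricSpace M] (o : M) (σ : ℝ → M) : Prop :=
  LipschitzWith 1 σ ∧ ∀ s : ℝ, s ≤ 0 → σ s = o

/-- Feasibility of a pair `(σ, T)` for the request sequence `x`: the schedule ends at the
origin at time `T` and visits each request position no earlier than its release time. -/
def Feasible {M : Type*} [MetricSpace M] (o : M) {n : ℕ} (x : Fin n → ℝ × M)
    (σ : ℝ → M) (T : ℝ) : Prop :=
  IsSchedule o σ ∧ 0 ≤ T ∧ σ T = o ∧
    ∀ i : Fin n, ∃ s : ℝ, (x i).1 ≤ s ∧ s ≤ T ∧ σ s = (x i).2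

/-- The optimal offline completion time of the request sequence `x`. -/
noncomputable def Z {M : Type*} [MetricSpace M] (o : M) {n : ℕ} (x : Fin n → ℝ × M) : ℝ :=
  sInf {T : ℝ | ∃ σ : ℝ → M, Feasible o x σ T}

/-- The optimal length of a closed tour through the request positions of `x`,
ignoring release times. -/
noncomputable def L {M : Type*} [MetricSpace M] (o : M) {n : ℕ} (x : Fin n → ℝ × M) : ℝ :=
  sInf {S : ℝ | 0 ≤ S ∧ ∃ γ : ℝ → M, LipschitzWith 1 γ ∧ γ 0 = o ∧ γ S = o ∧
    ∀ i : Fin n, ∃ s : ℝ, 0 ≤ s ∧ s ≤ S ∧ γ s = (x i).2}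

/-- `M` is geodesic: any two points are joined by a unit-speed geodesic. -/
def IsGeodesicSpace (M : Type*) [MetricSpace M] : Prop :=
  ∀ a b : M, ∃ γ : ℝ → M, LipschitzWith 1 γ ∧ γ 0 = a ∧ γ (dist a b) = b

lemma lip_glue {M : Type*} [MetricSpace M] {f g : ℝ → M} (hf : LipschitzWith 1 f)
    (hg : LipschitzWith 1 g) (a : ℝ) (hfg : f a = g a) :
    LipschitzWith 1 (fun u => if u ≤ a then f u else g u) := by
  apply LipschitzWith.of_dist_le_mul
  intro u v
  by_cases hu : u ≤ a <;> by_cases hv : v ≤ a <;>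
    simp only [hu, hv, if_true, if_false, NNReal.coe_one, one_mul]
  · simpa using hf.dist_le_mul u v
  · calc dist (f u) (g v) ≤ dist (f u) (f a) + dist (f a) (g v) := dist_triangle _ _ _
      _ = dist (f u) (f a) + dist (g a) (g v) := by rw [hfg]
      _ ≤ 1 * dist u a + 1 * dist a v := add_le_add (hf.dist_le_mul _ _) (hg.dist_le_mul _ _)
      _ = dist u v := by
          rw [one_mul, one_mul, Real.dist_eq, Real.dist_eq, Real.dist_eq,
            abs_of_nonpos (by linarith : u - a ≤ 0), abs_of_nonpos (by linarith : a - v ≤ 0),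
            abs_of_nonpos (by linarith : u - v ≤ 0)]
          ring
  · calc dist (g u) (f v) ≤ dist (g u) (g a) + dist (g a) (f v) := dist_triangle _ _ _
      _ = dist (g u) (g a) + dist (f a) (f v) := by rw [hfg]
      _ ≤ 1 * dist u a + 1 * dist a v := add_le_add (hg.dist_le_mul _ _) (hf.dist_le_mul _ _)
      _ = dist u v := by
          rw [one_mul, one_mul, Real.dist_eq, Real.dist_eq, Real.dist_eq,
            abs_of_nonneg (by linarith : (0:ℝ) ≤ u - a), abs_of_nonneg (by linarith : (0:ℝ) ≤ a - v),
            abs_of_nonneg (by linarith : (0:ℝ) ≤ u - v)]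
          ring
  · simpa using hg.dist_le_mul u v

lemma lip_shift {M : Type*} [MetricSpace M] {σ : ℝ → M} (hσ : LipschitzWith 1 σ) (c : ℝ) :
    LipschitzWith 1 (fun u => σ (u - c)) := by
  apply LipschitzWith.of_dist_le_mul
  intro u v
  calc dist (σ (u - c)) (σ (v - c)) ≤ 1 * dist (u - c) (v - c) := hσ.dist_le_mul _ _
    _ = 1 * dist u v := by rw [Real.dist_eq, Real.dist_eq]; ring_nf

lemma detour {M : Type*} [MetricSpace M] (hgeo : IsGeodesicSpace M) {σ : ℝ → M}
    (hσ : LipschitzWith 1 σ) (s : ℝ) (q : M) :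
    ∃ σ' : ℝ → M, LipschitzWith 1 σ' ∧ (∀ u, u ≤ s → σ' u = σ u) ∧
      (∀ u, s ≤ u → σ' (u + 2 * dist (σ s) q) = σ u) ∧
      σ' (s + dist (σ s) q) = q := by
  obtain ⟨γ, hγ, hγ0, hγd⟩ := hgeo (σ s) q
  set d := dist (σ s) q with hd
  have hd0 : 0 ≤ d := dist_nonneg
  set δ : ℝ → M := fun u => γ (d - |u - (s + d)|) with hδdef
  have hδlip : LipschitzWith 1 δ := by
    apply LipschitzWith.of_dist_le_mul
    intro u v
    calc dist (δ u) (δ v) ≤ 1 * dist (d - |u - (s + d)|) (d - |v - (s + d)|) :=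
          hγ.dist_le_mul _ _
      _ ≤ 1 * dist u v := by
          rw [one_mul, one_mul, Real.dist_eq, Real.dist_eq]
          have h1 : (d - |u - (s + d)|) - (d - |v - (s + d)|)
              = |v - (s + d)| - |u - (s + d)| := by ring
          rw [h1]
          calc |(|v - (s + d)|) - (|u - (s + d)|)| ≤ |(v - (s+d)) - (u - (s+d))| :=
                abs_abs_sub_abs_le_abs_sub _ _
            _ = |u - v| := by rw [show (v - (s+d)) - (u - (s+d)) = -(u - v) by ring, abs_neg]
  have hδs : δ s = σ s := by
    simp only [hδdef]
    rw [show s - (s + d) = -d by ring, abs_neg, abs_of_nonneg hd0, sub_self, hγ0]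
  have hδend : δ (s + 2 * d) = σ s := by
    simp only [hδdef]
    rw [show s + 2 * d - (s + d) = d by ring, abs_of_nonneg hd0, sub_self, hγ0]
  have hδmid : δ (s + d) = q := by
    simp only [hδdef]
    rw [show s + d - (s + d) = 0 by ring, abs_zero, sub_zero, hγd]
  set g1 : ℝ → M := fun u => if u ≤ s + 2 * d then δ u else σ (u - 2 * d) with hg1def
  have hg1lip : LipschitzWith 1 g1 := by
    apply lip_glue hδlip (lip_shift hσ (2 * d))
    rw [hδend, show s + 2 * d - 2 * d = s by ring]
  set σ' : ℝ → M := fun u => if u ≤ s then σ u else g1 u with hσ'def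
  have hσ'lip : LipschitzWith 1 σ' := by
    apply lip_glue hσ hg1lip
    rw [hg1def]; simp only
    rw [if_pos (by linarith : s ≤ s + 2 * d), hδs]
  refine ⟨σ', hσ'lip, ?_, ?_, ?_⟩
  · intro u hu; simp only [hσ'def, if_pos hu]
  · intro u hu
    by_cases h1 : u + 2 * d ≤ s
    · have hdz : d = 0 := le_antisymm (by linarith) hd0
      simp only [hσ'def, if_pos h1]
      rw [show u + 2 * d = u by rw [hdz]; ring]
    · simp only [hσ'def, if_neg h1, hg1def]
      by_cases h2 : u + 2 * d ≤ s + 2 * d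
      · have huv : u = s := le_antisymm (by linarith) hu
        simp only [if_pos h2, huv, hδend]
        rw [if_pos le_rfl]
      · simp only [if_neg h2]
        rw [show u + 2 * d - 2 * d = u by ring]
  · by_cases h : s + d ≤ s
    · have hdz : d = 0 := le_antisymm (by linarith) hd0
      have hq : σ s = q := eq_of_dist_eq_zero (hd ▸ hdz)
      simp only [hσ'def, if_pos h]
      rw [show s + d = s by rw [hdz]; ring, hq]
    · simp only [hσ'def, if_neg h, hg1def]
      rw [if_pos (by linarith : s + d ≤ s + 2 * d), hδmid]

lemma exists_feasible {M : Type*} [MetricSpace M] (o : M) (hgeo : IsGeodesicSpace M)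
    {n : ℕ} (x : Fin n → ℝ × M) (hx : ∀ i, 0 ≤ (x i).1) :
    ∃ σ T, Feasible o x σ T := by
  have key : ∀ k : ℕ, ∃ σ T, IsSchedule o σ ∧ 0 ≤ T ∧ σ T = o ∧
      ∀ i : Fin n, (i : ℕ) < k → ∃ s, (x i).1 ≤ s ∧ s ≤ T ∧ σ s = (x i).2 := by
    intro k
    induction k with
    | zero =>
      exact ⟨fun _ => o, 0, ⟨(LipschitzWith.const o).weaken zero_le_one, fun _ _ => rfl⟩,
        le_rfl, rfl, fun i hi => absurd hi (Nat.not_lt_zero _)⟩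
    | succ k ih =>
      obtain ⟨σ, T, ⟨hlip, hsch⟩, hT0, hTo, hvis⟩ := ih
      by_cases h : k < n
      · set ik : Fin n := ⟨k, h⟩ with hik
        set σ₁ : ℝ → M := fun u => if u ≤ T then σ u else o with hσ₁def
        have hσ₁lip : LipschitzWith 1 σ₁ := by
          apply lip_glue hlip ((LipschitzWith.const o).weaken zero_le_one)
          exact hTo
        set T1 : ℝ := max T (x ik).1 with hT1def
        have hT1T : T ≤ T1 := le_max_left _ _
        have hT1t : (x ik).1 ≤ T1 := le_max_right _ _
        have hσ₁T1 : σ₁ T1 = o := by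
          by_cases hc : T1 ≤ T
          · have hT1eq : T1 = T := le_antisymm hc hT1T
            show (if T1 ≤ T then σ T1 else o) = o
            rw [if_pos hc, hT1eq, hTo]
          · simp only [hσ₁def, if_neg hc]
        obtain ⟨σ', hσ'lip, hbefore, hafter, hmid⟩ := detour hgeo hσ₁lip T1 (x ik).2
        set d : ℝ := dist (σ₁ T1) ((x ik).2) with hddef
        have hd0 : 0 ≤ d := dist_nonneg
        refine ⟨σ', T1 + 2 * d, ⟨hσ'lip, ?_⟩, by linarith, ?_, ?_⟩
        · intro u hu
          rw [hbefore u (by linarith), hσ₁def]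
          simp only [if_pos (by linarith : u ≤ T)]
          exact hsch u hu
        · rw [hafter T1 le_rfl, hσ₁T1]
        · intro i hi
          rcases Nat.lt_succ_iff_lt_or_eq.1 hi with hi' | hi'
          · obtain ⟨s, hs1, hs2, hs3⟩ := hvis i hi'
            refine ⟨s, hs1, by linarith, ?_⟩
            rw [hbefore s (by linarith), hσ₁def]
            simp only [if_pos hs2]
            exact hs3
          · have hieq : i = ik := Fin.ext hi'
            refine ⟨T1 + d, ?_, by linarith, ?_⟩
            · rw [hieq]; linarith
            · rw [hieq]; exact hmid
      · refine ⟨σ, T, ⟨hlip, hsch⟩, hT0, hTo, fun i _ => hvis i ?_⟩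
        exact lt_of_lt_of_le i.isLt (not_lt.1 h)
  obtain ⟨σ, T, h1, h2, h3, h4⟩ := key n
  exact ⟨σ, T, h1, h2, h3, fun i => h4 i i.isLt⟩

lemma Z_le_aux {M : Type*} [MetricSpace M] (o : M) (hgeo : IsGeodesicSpace M) {n : ℕ}
    (x xh : Fin n → ℝ × M) (hx : ∀ i, 0 ≤ (x i).1) :
    Z o xh ≤ Z o x + (⨆ i, |(xh i).1 - (x i).1|) + 2 * ∑ i, dist (xh i).2 (x i).2 := by
  set ε : ℝ := ⨆ i, |(xh i).1 - (x i).1| with hεdef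
  set P : ℝ := ∑ i, dist (xh i).2 (x i).2 with hPdef
  have hεbd : ∀ i : Fin n, |(xh i).1 - (x i).1| ≤ ε := by
    intro i; rw [hεdef]
    exact le_ciSup (f := fun i : Fin n => |(xh i).1 - (x i).1|) (Set.Finite.bddAbove (Set.finite_range _)) i
  have hε0 : 0 ≤ ε := by
    rcases Nat.eq_zero_or_pos n with h | h
    · subst h
      rw [hεdef, Real.iSup_of_isEmpty]
    · exact le_trans (abs_nonneg _) (hεbd ⟨0, h⟩)
  set d' : ℕ → ℝ := fun j => if h : j < n then dist (xh ⟨j, h⟩).2 (x ⟨j, h⟩).2 else 0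
    with hd'def
  have hd'0 : ∀ j, 0 ≤ d' j := by
    intro j; rw [hd'def]; dsimp only
    split <;> [exact dist_nonneg; exact le_rfl]
  have hsum : ∑ j ∈ Finset.range n, d' j = P := by
    rw [hPdef, ← Fin.sum_univ_eq_sum_range]
    exact Finset.sum_congr rfl (fun i _ => by rw [hd'def]; exact dif_pos i.isLt)
  have hbdd : BddBelow {T : ℝ | ∃ σ : ℝ → M, Feasible o xh σ T} :=
    ⟨0, fun T ⟨σ, hσ⟩ => hσ.2.1⟩
  have hne : {T : ℝ | ∃ σ : ℝ → M, Feasible o x σ T}.Nonempty := by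
    obtain ⟨σ, T, hF⟩ := exists_feasible o hgeo x hx
    exact ⟨T, σ, hF⟩
  have main : ∀ T ∈ {T : ℝ | ∃ σ : ℝ → M, Feasible o x σ T}, Z o xh - (ε + 2 * P) ≤ T := by
    rintro T ⟨σ, ⟨hlip, hsch⟩, hT0, hTo, hvis⟩
    have key : ∀ k : ℕ, ∃ σ' T', IsSchedule o σ' ∧ 0 ≤ T' ∧ σ' T' = o ∧
        (∀ i : Fin n, ∃ s, (x i).1 ≤ s ∧ s ≤ T' ∧
          σ' s = (if (i : ℕ) < k then (xh i).2 else (x i).2)) ∧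
        T' ≤ T + 2 * ∑ j ∈ Finset.range k, d' j := by
      intro k
      induction k with
      | zero =>
        refine ⟨σ, T, ⟨hlip, hsch⟩, hT0, hTo, fun i => ?_, by simp⟩
        simp only [Nat.not_lt_zero, if_false]
        exact hvis i
      | succ k ih =>
        obtain ⟨σ', T', ⟨hlip', hsch'⟩, hT0', hTo', hvis', hbnd'⟩ := ih
        by_cases h : k < n
        · set ik : Fin n := ⟨k, h⟩ with hik
          obtain ⟨sk, hsk1, hsk2, hsk3⟩ := hvis' ik
          have hsk3' : σ' sk = (x ik).2 := by
            rwa [if_neg (lt_irrefl k)] at hsk3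
          have hsk0 : 0 ≤ sk := le_trans (hx ik) hsk1
          obtain ⟨σ'', hσ''lip, hbefore, hafter, hmid⟩ := detour hgeo hlip' sk (xh ik).2
          set d : ℝ := dist (σ' sk) ((xh ik).2) with hddef
          have hd0 : 0 ≤ d := dist_nonneg
          have hdd' : d = d' k := by
            rw [hddef, hsk3', hd'def]
            simp only [dif_pos h]
            exact dist_comm _ _
          refine ⟨σ'', T' + 2 * d, ⟨hσ''lip, ?_⟩, by linarith, ?_, ?_, ?_⟩
          · intro u hu
            rw [hbefore u (by linarith)]
            exact hsch' u hu
          · rw [hafter T' hsk2, hTo']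
          · intro i
            by_cases hicase : (i : ℕ) = k
            · have hieq : i = ik := Fin.ext hicase
              refine ⟨sk + d, ?_, by linarith, ?_⟩
              · rw [hieq]; linarith
              · rw [if_pos (by omega : (i : ℕ) < k + 1), hieq]
                exact hmid
            · obtain ⟨s, hs1, hs2, hs3⟩ := hvis' i
              have htarget : (if (i : ℕ) < k then (xh i).2 else (x i).2)
                  = (if (i : ℕ) < k + 1 then (xh i).2 else (x i).2) := by
                by_cases hik' : (i : ℕ) < k
                · rw [if_pos hik', if_pos (by omega)]
                · rw [if_neg hik', if_neg (by omega)]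
              rcases le_total s sk with hss | hss
              · exact ⟨s, hs1, by linarith, by rw [hbefore s hss, ← htarget]; exact hs3⟩
              · exact ⟨s + 2 * d, by linarith, by linarith,
                  by rw [hafter s hss, ← htarget]; exact hs3⟩
          · rw [Finset.sum_range_succ, ← hdd']
            linarith
        · refine ⟨σ', T', ⟨hlip', hsch'⟩, hT0', hTo', fun i => ?_, ?_⟩
          · obtain ⟨s, hs1, hs2, hs3⟩ := hvis' i
            have : (i : ℕ) < k := lt_of_lt_of_le i.isLt (not_lt.1 h)
            refine ⟨s, hs1, hs2, ?_⟩
            rw [if_pos (by omega)]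
            rwa [if_pos this] at hs3
          · rw [Finset.sum_range_succ]
            have := hd'0 k
            linarith
    obtain ⟨σ', T', ⟨hlip', hsch'⟩, hT0', hTo', hvis', hbnd'⟩ := key n
    rw [hsum] at hbnd'
    -- shift by ε
    set σh : ℝ → M := fun u => σ' (u - ε) with hσhdef
    have hF : Feasible o xh σh (T' + ε) := by
      refine ⟨⟨lip_shift hlip' ε, fun u hu => hsch' _ (by linarith)⟩, by linarith, ?_, ?_⟩
      · simp only [hσhdef]
        rw [show T' + ε - ε = T' by ring, hTo']
      · intro i
        obtain ⟨s, hs1, hs2, hs3⟩ := hvis' i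
        rw [if_pos i.isLt] at hs3
        have hti : (xh i).1 ≤ (x i).1 + ε := by
          have := hεbd i
          have := abs_le.1 this
          linarith [this.2]
        refine ⟨s + ε, by linarith, by linarith, ?_⟩
        simp only [hσhdef]
        rw [show s + ε - ε = s by ring]
        exact hs3
    have : Z o xh ≤ T' + ε := csInf_le hbdd ⟨σh, hF⟩
    linarith
  have hZx : Z o xh - (ε + 2 * P) ≤ Z o x := le_csInf hne main
  linarith

/-- The optimal offline completion times of the actual and the predicted instance differ
by at most `ε_time + 2 ε_pos`. -/
theorem abs_Z_sub_Z_le {M : Type*} [MetricSpace M] (o : M)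
    (hgeo : IsGeodesicSpace M) {n : ℕ}
    (x xh : Fin n → ℝ × M) (hx : ∀ i, 0 ≤ (x i).1) (hxh : ∀ i, 0 ≤ (xh i).1) :
    |Z o x - Z o xh| ≤ (⨆ i, |(xh i).1 - (x i).1|) + 2 * ∑ i, dist (xh i).2 (x i).2 := by
  have h1 := Z_le_aux o hgeo x xh hx
  have h2 := Z_le_aux o hgeo xh x hxh
  have hsym1 : (⨆ i, |(x i).1 - (xh i).1|) = ⨆ i, |(xh i).1 - (x i).1| := by
    congr 1; funext i; exact abs_sub_comm _ _
  have hsym2 : (∑ i, dist (x i).2 (xh i).2) = ∑ i, dist (xh i).2 (x i).2 :=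
    Finset.sum_congr rfl (fun i _ => dist_comm _ _)
  rw [hsym1, hsym2] at h2
  rw [abs_sub_le_iff]
  constructor <;> linarith
end

section
/- Assume M is geodesic and let x = ((t_i,a_i,b_i))_{i=1}^n and x̂ = ((t̂_i,â_i,b̂_i))_{i=1}^n be dial-a-ride request sequences of the same length n. For every feasible pair (σ, T) for x there exists a feasible pair (σ', T') for x̂ with T' ≤ T + ε_time + 2·ε_pos; consequently Z_D(x̂) ≤ Z_D(x) + ε_time + 2·ε_pos. (Paper's dial-a-ride Lemma: Z'_{x̂} ≤ Z*_{x̂} ≤ Z^OPT + ε_time + 2 ε_pos, proved by delaying the route by ε_time and inserting detours of length 2·dist(a_i, â_i) at each pickup and 2·dist(b_i, b̂_i) at each delivery.) -/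
/-- Feasibility of a pair `(σ, T)` for the dial-a-ride request sequence `x`: the schedule
is 1-Lipschitz, stays at the origin at all times `≤ 0`, ends at the origin at time `T`,
and for each request visits its pickup position (no earlier than its release time) and
afterwards its delivery position (uncapacitated server). -/
def FeasibleD {M : Type*} [MetricSpace M] (o : M) {n : ℕ} (x : Fin n → ℝ × M × M)
    (σ : ℝ → M) (T : ℝ) : Prop :=
  (LipschitzWith 1 σ ∧ ∀ s : ℝ, s ≤ 0 → σ s = o) ∧ 0 ≤ T ∧ σ T = o ∧
    ∀ i : Fin n, ∃ s u : ℝ, (x i).1 ≤ s ∧ s ≤ u ∧ u ≤ T ∧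
      σ s = (x i).2.1 ∧ σ u = (x i).2.2

/-- The optimal offline completion time of the dial-a-ride request sequence `x`. -/
noncomputable def ZD {M : Type*} [MetricSpace M] (o : M) {n : ℕ}
    (x : Fin n → ℝ × M × M) : ℝ :=
  sInf {T : ℝ | ∃ σ : ℝ → M, FeasibleD o x σ T}

/-- The optimal length of a closed dial-a-ride tour for `x`, ignoring release times. -/
noncomputable def LD {M : Type*} [MetricSpace M] (o : M) {n : ℕ}
    (x : Fin n → ℝ × M × M) : ℝ :=
  sInf {S : ℝ | 0 ≤ S ∧ ∃ γ : ℝ → M, LipschitzWith 1 γ ∧ γ 0 = o ∧ γ S = o ∧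
    ∀ i : Fin n, ∃ s u : ℝ, 0 ≤ s ∧ s ≤ u ∧ u ≤ S ∧
      γ s = (x i).2.1 ∧ γ u = (x i).2.2}

section Glue
variable {M : Type*} [MetricSpace M]

lemma glue_lip {f g : ℝ → M} (hf : LipschitzWith 1 f) (hg : LipschitzWith 1 g)
    (c : ℝ) (hfg : f c = g c) :
    LipschitzWith 1 (fun t => if t ≤ c then f t else g t) := by
  have key : ∀ p q : ℝ, p ≤ q →
      dist (if p ≤ c then f p else g p) (if q ≤ c then f q else g q) ≤ 1 * dist p q := by
    intro p q hpq
    rcases le_or_gt q c with hq | hq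
    · rw [if_pos (hpq.trans hq), if_pos hq]
      exact hf.dist_le_mul p q
    · rcases le_or_gt p c with hp | hp
      · rw [if_pos hp, if_neg (not_le.mpr hq)]
        calc dist (f p) (g q) ≤ dist (f p) (f c) + dist (f c) (g q) := dist_triangle _ _ _
          _ = dist (f p) (f c) + dist (g c) (g q) := by rw [hfg]
          _ ≤ 1 * dist p c + 1 * dist c q :=
              add_le_add (hf.dist_le_mul _ _) (hg.dist_le_mul _ _)
          _ ≤ 1 * dist p q := by
              rw [one_mul, one_mul, one_mul, Real.dist_eq, Real.dist_eq, Real.dist_eq,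
                abs_of_nonpos (by linarith : p - c ≤ 0),
                abs_of_nonpos (by linarith : c - q ≤ 0),
                abs_of_nonpos (by linarith : p - q ≤ 0)]
              linarith
      · rw [if_neg (not_le.mpr hp), if_neg (not_le.mpr hq)]
        exact hg.dist_le_mul p q
  apply LipschitzWith.of_dist_le_mul
  intro p q
  rcases le_total p q with h | h
  · exact key p q h
  · rw [dist_comm, dist_comm p q]
    exact key q p h

lemma lip_shift_s12 {f : ℝ → M} (hf : LipschitzWith 1 f) (c : ℝ) :
    LipschitzWith 1 (fun r => f (r - c)) := by
  apply LipschitzWith.of_dist_le_mul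
  intro p q
  calc dist (f (p - c)) (f (q - c)) ≤ 1 * dist (p - c) (q - c) := hf.dist_le_mul _ _
    _ = 1 * dist p q := by rw [Real.dist_eq, Real.dist_eq, sub_sub_sub_cancel_right]

lemma lip_rev {f : ℝ → M} (hf : LipschitzWith 1 f) (c : ℝ) :
    LipschitzWith 1 (fun r => f (c - r)) := by
  apply LipschitzWith.of_dist_le_mul
  intro p q
  calc dist (f (c - p)) (f (c - q)) ≤ 1 * dist (c - p) (c - q) := hf.dist_le_mul _ _
    _ = 1 * dist p q := by
        rw [Real.dist_eq, Real.dist_eq, show c - p - (c - q) = -(p - q) by ring, abs_neg]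

/-- The detour schedule: follow `σ` until time `s`, detour along `γa` to the predicted pickup
and back, then follow `σ` (delayed by `2*da`) until `u + 2*da`, detour along `γb` to the
predicted delivery and back, then follow `σ` delayed by `2*da + 2*db`. -/
noncomputable def detourSchedule (σ γa γb : ℝ → M) (s u da db : ℝ) : ℝ → M := fun r =>
  if r ≤ s then σ r
  else if r ≤ s + da then γa (r - s)
  else if r ≤ s + 2*da then γa (s + 2*da - r)
  else if r ≤ u + 2*da then σ (r - 2*da)
  else if r ≤ u + 2*da + db then γb (r - (u + 2*da))
  else if r ≤ u + 2*da + 2*db then γb (u + 2*da + 2*db - r)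
  else σ (r - (2*da + 2*db))

variable {σ γa γb : ℝ → M} {s u da db : ℝ}

lemma ds_lip (hσ : LipschitzWith 1 σ) (hγa : LipschitzWith 1 γa) (hγb : LipschitzWith 1 γb)
    (hda : 0 ≤ da) (hdb : 0 ≤ db) (hsu : s ≤ u)
    (hA : γa 0 = σ s) (hB : γb 0 = σ u) :
    LipschitzWith 1 (detourSchedule σ γa γb s u da db) := by
  have L6 : LipschitzWith 1 (fun r =>
      if r ≤ u + 2*da + 2*db then γb (u + 2*da + 2*db - r) else σ (r - (2*da + 2*db))) := by
    refine glue_lip (lip_rev hγb _) (lip_shift_s12 hσ _) _ ?_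
    show γb (u + 2*da + 2*db - (u + 2*da + 2*db)) = σ (u + 2*da + 2*db - (2*da + 2*db))
    rw [sub_self, hB]
    congr 1; ring
  have L5 : LipschitzWith 1 (fun r =>
      if r ≤ u + 2*da + db then γb (r - (u + 2*da))
      else if r ≤ u + 2*da + 2*db then γb (u + 2*da + 2*db - r) else σ (r - (2*da + 2*db))) := by
    refine glue_lip (lip_shift_s12 hγb _) L6 _ ?_
    show γb (u + 2*da + db - (u + 2*da)) =
      if u + 2*da + db ≤ u + 2*da + 2*db then γb (u + 2*da + 2*db - (u + 2*da + db))
      else σ (u + 2*da + db - (2*da + 2*db))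
    rw [if_pos (by linarith)]
    congr 1; ring
  have L4 : LipschitzWith 1 (fun r =>
      if r ≤ u + 2*da then σ (r - 2*da)
      else if r ≤ u + 2*da + db then γb (r - (u + 2*da))
      else if r ≤ u + 2*da + 2*db then γb (u + 2*da + 2*db - r) else σ (r - (2*da + 2*db))) := by
    refine glue_lip (lip_shift_s12 hσ _) L5 _ ?_
    show σ (u + 2*da - 2*da) =
      if u + 2*da ≤ u + 2*da + db then γb (u + 2*da - (u + 2*da))
      else if u + 2*da ≤ u + 2*da + 2*db then γb (u + 2*da + 2*db - (u + 2*da))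
      else σ (u + 2*da - (2*da + 2*db))
    rw [if_pos (by linarith), add_sub_cancel_right, sub_self, hB]
  have L3 : LipschitzWith 1 (fun r =>
      if r ≤ s + 2*da then γa (s + 2*da - r)
      else if r ≤ u + 2*da then σ (r - 2*da)
      else if r ≤ u + 2*da + db then γb (r - (u + 2*da))
      else if r ≤ u + 2*da + 2*db then γb (u + 2*da + 2*db - r) else σ (r - (2*da + 2*db))) := by
    refine glue_lip (lip_rev hγa _) L4 _ ?_
    show γa (s + 2*da - (s + 2*da)) =
      if s + 2*da ≤ u + 2*da then σ (s + 2*da - 2*da)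
      else if s + 2*da ≤ u + 2*da + db then γb (s + 2*da - (u + 2*da))
      else if s + 2*da ≤ u + 2*da + 2*db then γb (u + 2*da + 2*db - (s + 2*da))
      else σ (s + 2*da - (2*da + 2*db))
    rw [if_pos (by linarith), sub_self, hA, add_sub_cancel_right]
  have L2 : LipschitzWith 1 (fun r =>
      if r ≤ s + da then γa (r - s)
      else if r ≤ s + 2*da then γa (s + 2*da - r)
      else if r ≤ u + 2*da then σ (r - 2*da)
      else if r ≤ u + 2*da + db then γb (r - (u + 2*da))
      else if r ≤ u + 2*da + 2*db then γb (u + 2*da + 2*db - r) else σ (r - (2*da + 2*db))) := by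
    refine glue_lip (lip_shift_s12 hγa _) L3 _ ?_
    show γa (s + da - s) =
      if s + da ≤ s + 2*da then γa (s + 2*da - (s + da))
      else if s + da ≤ u + 2*da then σ (s + da - 2*da)
      else if s + da ≤ u + 2*da + db then γb (s + da - (u + 2*da))
      else if s + da ≤ u + 2*da + 2*db then γb (u + 2*da + 2*db - (s + da))
      else σ (s + da - (2*da + 2*db))
    rw [if_pos (by linarith), add_sub_cancel_left]
    congr 1; ring
  unfold detourSchedule
  refine glue_lip hσ L2 s ?_
  show σ s =
    if s ≤ s + da then γa (s - s)
    else if s ≤ s + 2*da then γa (s + 2*da - s)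
    else if s ≤ u + 2*da then σ (s - 2*da)
    else if s ≤ u + 2*da + db then γb (s - (u + 2*da))
    else if s ≤ u + 2*da + 2*db then γb (u + 2*da + 2*db - s)
    else σ (s - (2*da + 2*db))
  rw [if_pos (by linarith), sub_self]
  exact hA.symm

lemma ds_left {r : ℝ} (hr : r ≤ s) :
    detourSchedule σ γa γb s u da db r = σ r := by
  simp only [detourSchedule]
  rw [if_pos hr]

lemma ds_mid (hda : 0 ≤ da) (hsu : s ≤ u) (hA : γa 0 = σ s)
    {t : ℝ} (h1 : s ≤ t) (h2 : t ≤ u) :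
    detourSchedule σ γa γb s u da db (t + 2*da) = σ t := by
  simp only [detourSchedule]
  split_ifs with h3 h4 h5 h6 h7 h8
  · have h0 : da = 0 := le_antisymm (by linarith) hda
    rw [h0]; norm_num
  · exfalso; linarith
  · have hts : t = s := le_antisymm (by linarith) h1
    subst hts
    rw [sub_self, hA]
  · rw [add_sub_cancel_right]
  · exfalso; linarith
  · exfalso; linarith
  · exfalso; linarith

lemma ds_right (hda : 0 ≤ da) (hdb : 0 ≤ db) (hsu : s ≤ u)
    (hA : γa 0 = σ s) (hB : γb 0 = σ u) {t : ℝ} (h1 : u ≤ t) :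
    detourSchedule σ γa γb s u da db (t + 2*da + 2*db) = σ t := by
  simp only [detourSchedule]
  split_ifs with h3 h4 h5 h6 h7 h8
  · have ha0 : da = 0 := le_antisymm (by linarith) hda
    have hb0 : db = 0 := le_antisymm (by linarith) hdb
    rw [ha0, hb0]; norm_num
  · exfalso; linarith
  · have hb0 : db = 0 := le_antisymm (by linarith) hdb
    have hts : t = s := le_antisymm (by linarith) (by linarith)
    rw [show s + 2*da - (t + 2*da + 2*db) = 0 by rw [hts, hb0]; ring, hA, hts]
  · have hb0 : db = 0 := le_antisymm (by linarith) hdb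
    rw [hb0]; norm_num
  · exfalso; linarith
  · have htu : t = u := le_antisymm (by linarith) h1
    rw [show u + 2*da + 2*db - (t + 2*da + 2*db) = 0 by rw [htu]; ring, hB, htu]
  · rw [show t + 2*da + 2*db - (2*da + 2*db) = t by ring]

lemma ds_pick (hda : 0 ≤ da) (hA : γa 0 = σ s) :
    detourSchedule σ γa γb s u da db (s + da) = γa da := by
  simp only [detourSchedule]
  split_ifs with h1 h2
  · have h0 : da = 0 := le_antisymm (by linarith) hda
    rw [h0, add_zero]
    exact hA.symm
  · rw [add_sub_cancel_left]
  all_goals exact absurd le_rfl h2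

lemma ds_del (hda : 0 ≤ da) (hdb : 0 ≤ db) (hsu : s ≤ u)
    (hA : γa 0 = σ s) (hB : γb 0 = σ u) :
    detourSchedule σ γa γb s u da db (u + 2*da + db) = γb db := by
  simp only [detourSchedule]
  split_ifs with h1 h2 h3 h4 h5
  · have ha0 : da = 0 := le_antisymm (by linarith) hda
    have hb0 : db = 0 := le_antisymm (by linarith) hdb
    rw [ha0, hb0, hB]; norm_num
  · exfalso; linarith
  · have hb0 : db = 0 := le_antisymm (by linarith) hdb
    have hus : u = s := le_antisymm (by linarith) hsu
    rw [show s + 2*da - (u + 2*da + db) = 0 by rw [hus, hb0]; ring, hA, hb0, hB, hus]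
  · have hb0 : db = 0 := le_antisymm (by linarith) hdb
    rw [hb0, hB]; norm_num
  · rw [add_sub_cancel_left]
  all_goals exact absurd le_rfl h5

end Glue

lemma detour_s12 {M : Type*} [MetricSpace M] (o : M) (hgeo : IsGeodesicSpace M) {n : ℕ}
    (y y' : Fin n → ℝ × M × M) (i₀ : Fin n) (a' b' : M)
    (hy0 : 0 ≤ (y i₀).1)
    (h1 : y' i₀ = ((y i₀).1, a', b')) (h2 : ∀ j, j ≠ i₀ → y' j = y j)
    {σ : ℝ → M} {T : ℝ} (h : FeasibleD o y σ T) :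
    ∃ σ', FeasibleD o y' σ'
      (T + 2 * dist (y i₀).2.1 a' + 2 * dist (y i₀).2.2 b') := by
  obtain ⟨⟨hlip, h0⟩, hT0, hTo, hreq⟩ := h
  obtain ⟨s, u, hts, hsu, huT, hsa, hub⟩ := hreq i₀
  obtain ⟨γa, hγa, hγa0, hγa1⟩ := hgeo (y i₀).2.1 a'
  obtain ⟨γb, hγb, hγb0, hγb1⟩ := hgeo (y i₀).2.2 b'
  set da := dist (y i₀).2.1 a' with hda_def
  set db := dist (y i₀).2.2 b' with hdb_def
  have hda : 0 ≤ da := dist_nonneg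
  have hdb : 0 ≤ db := dist_nonneg
  have hA : γa 0 = σ s := by rw [hγa0, hsa]
  have hB : γb 0 = σ u := by rw [hγb0, hub]
  have hs0 : 0 ≤ s := le_trans hy0 hts
  -- the time-shift map
  set φ : ℝ → ℝ := fun t => if t ≤ s then t else if t ≤ u then t + 2*da else t + 2*da + 2*db
    with hφ_def
  have φ_eval : ∀ t, detourSchedule σ γa γb s u da db (φ t) = σ t := by
    intro t
    show detourSchedule σ γa γb s u da db
      (if t ≤ s then t else if t ≤ u then t + 2*da else t + 2*da + 2*db) = σ t
    split_ifs with c1 c2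
    · exact ds_left c1
    · exact ds_mid hda hsu hA (le_of_not_ge c1) c2
    · exact ds_right hda hdb hsu hA hB (le_of_not_ge c2)
  have φ_ge : ∀ t, t ≤ φ t := by
    intro t
    show t ≤ if t ≤ s then t else if t ≤ u then t + 2*da else t + 2*da + 2*db
    split_ifs <;> linarith
  have φ_ub : ∀ t, φ t ≤ t + 2*da + 2*db := by
    intro t
    show (if t ≤ s then t else if t ≤ u then t + 2*da else t + 2*da + 2*db) ≤ t + 2*da + 2*db
    split_ifs <;> linarith
  have φ_mono : ∀ p q, p ≤ q → φ p ≤ φ q := by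
    intro p q hpq
    show (if p ≤ s then p else if p ≤ u then p + 2*da else p + 2*da + 2*db) ≤
      (if q ≤ s then q else if q ≤ u then q + 2*da else q + 2*da + 2*db)
    split_ifs <;> linarith
  refine ⟨detourSchedule σ γa γb s u da db,
    ⟨ds_lip hlip hγa hγb hda hdb hsu hA hB, ?_⟩, by linarith, ?_, ?_⟩
  · intro r hr
    rw [ds_left (le_trans hr hs0)]
    exact h0 r hr
  · rw [ds_right hda hdb hsu hA hB huT]
    exact hTo
  · intro j
    by_cases hj : j = i₀
    · subst hj
      refine ⟨s + da, u + 2*da + db, ?_, by linarith, by linarith, ?_, ?_⟩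
      · rw [h1]; exact le_trans hts (by linarith)
      · rw [h1, ds_pick hda hA]; exact hγa1
      · rw [h1, ds_del hda hdb hsu hA hB]; exact hγb1
    · obtain ⟨sj, uj, hj1, hj2, hj3, hj4, hj5⟩ := hreq j
      refine ⟨φ sj, φ uj, ?_, φ_mono _ _ hj2, ?_, ?_, ?_⟩
      · rw [h2 j hj]; exact le_trans hj1 (φ_ge sj)
      · exact le_trans (φ_ub uj) (by linarith)
      · rw [h2 j hj, φ_eval]; exact hj4
      · rw [h2 j hj, φ_eval]; exact hj5

lemma key_lemma {M : Type*} [MetricSpace M] (o : M) (hgeo : IsGeodesicSpace M) {n : ℕ}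
    (x xh : Fin n → ℝ × M × M) (hxh : ∀ i, 0 ≤ (xh i).1) :
    ∀ σ T, FeasibleD o x σ T →
      ∃ σ' T', FeasibleD o xh σ' T' ∧
        T' ≤ T + (⨆ i, |(xh i).1 - (x i).1|) +
          2 * ∑ i, (dist (xh i).2.1 (x i).2.1 + dist (xh i).2.2 (x i).2.2) := by
  intro σ T h
  obtain ⟨⟨hlip, h0⟩, hT0, hTo, hreq⟩ := h
  set ε := ⨆ i, |(xh i).1 - (x i).1| with hε_def
  have hε0 : 0 ≤ ε := Real.iSup_nonneg fun i => abs_nonneg _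
  have hεi : ∀ i, |(xh i).1 - (x i).1| ≤ ε := by
    intro i
    rw [hε_def]
    exact le_ciSup (f := fun j => |(xh j).1 - (x j).1|) (Set.Finite.bddAbove (Set.finite_range _)) i
  have main : ∀ k : ℕ, k ≤ n →
      ∃ σ' T', FeasibleD o (fun i => ((xh i).1, if (i : ℕ) < k then (xh i).2 else (x i).2)) σ' T' ∧
        T' ≤ T + ε + 2 * ∑ i ∈ Finset.filter (fun i : Fin n => (i : ℕ) < k) Finset.univ,
          (dist (xh i).2.1 (x i).2.1 + dist (xh i).2.2 (x i).2.2) := by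
    intro k
    induction k with
    | zero =>
      intro _
      have h00 : (fun i : Fin n => ((xh i).1, if (i : ℕ) < 0 then (xh i).2 else (x i).2)) =
          (fun i => ((xh i).1, (x i).2)) := by
        funext i; simp
      rw [h00]
      have hemp : Finset.filter (fun i : Fin n => (i : ℕ) < 0) Finset.univ = ∅ := by simp
      rw [hemp, Finset.sum_empty]
      refine ⟨fun r => σ (r - ε), T + ε, ⟨⟨lip_shift_s12 hlip ε, ?_⟩, by linarith, ?_, ?_⟩,
        by linarith⟩
      · intro r hr
        exact h0 _ (by linarith)
      · show σ (T + ε - ε) = o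
        rw [add_sub_cancel_right]
        exact hTo
      · intro i
        obtain ⟨si, ui, hi1, hi2, hi3, hi4, hi5⟩ := hreq i
        have habs : (xh i).1 - (x i).1 ≤ ε := le_trans (le_abs_self _) (hεi i)
        refine ⟨si + ε, ui + ε, by simp only; linarith, by linarith, by linarith, ?_, ?_⟩
        · show σ (si + ε - ε) = _
          rw [add_sub_cancel_right]
          exact hi4
        · show σ (ui + ε - ε) = _
          rw [add_sub_cancel_right]
          exact hi5
    | succ k ih =>
      intro hk1
      obtain ⟨σ₁, T₁, hfeas, hle⟩ := ih (Nat.le_of_succ_le hk1)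
      set i₀ : Fin n := ⟨k, hk1⟩ with hi₀_def
      have hdet := detour_s12 o hgeo
        (fun i : Fin n => ((xh i).1, if (i : ℕ) < k then (xh i).2 else (x i).2))
        (fun i : Fin n => ((xh i).1, if (i : ℕ) < k + 1 then (xh i).2 else (x i).2))
        i₀ (xh i₀).2.1 (xh i₀).2.2 (hxh i₀) ?_ ?_ hfeas
      · obtain ⟨σ₂, hfeas₂⟩ := hdet
        refine ⟨σ₂, _, hfeas₂, ?_⟩
        have hins : Finset.filter (fun i : Fin n => (i : ℕ) < k + 1) Finset.univ =
            insert i₀ (Finset.filter (fun i : Fin n => (i : ℕ) < k) Finset.univ) := by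
          ext j
          simp only [Finset.mem_filter, Finset.mem_univ, true_and, Finset.mem_insert,
            Fin.ext_iff, hi₀_def]
          omega
        rw [hins, Finset.sum_insert (by simp [hi₀_def])]
        have e0 : ((fun i : Fin n => ((xh i).1, if (i : ℕ) < k then (xh i).2 else (x i).2)) i₀).2
            = (x i₀).2 := by
          simp [hi₀_def]
        rw [e0]
        have ec1 : dist (x i₀).2.1 (xh i₀).2.1 = dist (xh i₀).2.1 (x i₀).2.1 := dist_comm _ _
        have ec2 : dist (x i₀).2.2 (xh i₀).2.2 = dist (xh i₀).2.2 (x i₀).2.2 := dist_comm _ _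
        rw [ec1, ec2]
        linarith
      · simp [hi₀_def]
      · intro j hj
        have hne : (j : ℕ) ≠ k := by
          intro hc
          exact hj (Fin.ext (by simpa [hi₀_def] using hc))
        simp only [show ((j : ℕ) < k + 1 ↔ (j : ℕ) < k) from by omega]
  obtain ⟨σ', T', hfeas, hle⟩ := main n le_rfl
  have hinst : (fun i : Fin n => ((xh i).1, if (i : ℕ) < n then (xh i).2 else (x i).2)) = xh := by
    funext i
    simp [i.isLt]
  have hful : Finset.filter (fun i : Fin n => (i : ℕ) < n) Finset.univ = Finset.univ :=
    Finset.filter_true_of_mem (fun i _ => i.isLt)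
  rw [hinst] at hfeas
  rw [hful] at hle
  exact ⟨σ', T', hfeas, hle⟩


/-- From any feasible pair for the actual dial-a-ride instance `x` one obtains a feasible
pair for the predicted instance `x̂` at an extra cost of `ε_time + 2 ε_pos`; consequently
`Z_D(x̂) ≤ Z_D(x) + ε_time + 2 ε_pos`. -/
theorem darp_predicted_le_actual {M : Type*} [MetricSpace M] (o : M)
    (hgeo : IsGeodesicSpace M) {n : ℕ}
    (x xh : Fin n → ℝ × M × M) (hx : ∀ i, 0 ≤ (x i).1) (hxh : ∀ i, 0 ≤ (xh i).1) :
    (∀ σ T, FeasibleD o x σ T →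
      ∃ σ' T', FeasibleD o xh σ' T' ∧
        T' ≤ T + (⨆ i, |(xh i).1 - (x i).1|) +
          2 * ∑ i, (dist (xh i).2.1 (x i).2.1 + dist (xh i).2.2 (x i).2.2)) ∧
    ZD o xh ≤ ZD o x + (⨆ i, |(xh i).1 - (x i).1|) +
      2 * ∑ i, (dist (xh i).2.1 (x i).2.1 + dist (xh i).2.2 (x i).2.2) := by
  have hkey := key_lemma o hgeo x xh hxh
  refine ⟨hkey, ?_⟩
  have hε0 : 0 ≤ ⨆ i, |(xh i).1 - (x i).1| := Real.iSup_nonneg fun i => abs_nonneg _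
  have hP0 : 0 ≤ 2 * ∑ i, (dist (xh i).2.1 (x i).2.1 + dist (xh i).2.2 (x i).2.2) := by
    apply mul_nonneg (by norm_num)
    exact Finset.sum_nonneg fun i _ => add_nonneg dist_nonneg dist_nonneg
  have hbdd : BddBelow {T : ℝ | ∃ σ : ℝ → M, FeasibleD o xh σ T} := by
    refine ⟨0, fun T hT => ?_⟩
    obtain ⟨σ, hσ⟩ := hT
    exact hσ.2.1
  by_cases hS : {T : ℝ | ∃ σ : ℝ → M, FeasibleD o x σ T}.Nonempty
  · have hub : ∀ T ∈ {T : ℝ | ∃ σ : ℝ → M, FeasibleD o x σ T},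
        ZD o xh - ((⨆ i, |(xh i).1 - (x i).1|) +
          2 * ∑ i, (dist (xh i).2.1 (x i).2.1 + dist (xh i).2.2 (x i).2.2)) ≤ T := by
      intro T hT
      obtain ⟨σ, hσ⟩ := hT
      obtain ⟨σ', T', hfeas, hle⟩ := hkey σ T hσ
      have h1 : ZD o xh ≤ T' := csInf_le hbdd ⟨σ', hfeas⟩
      linarith
    have h2 := le_csInf hS hub
    have h3 : ZD o x = sInf {T : ℝ | ∃ σ : ℝ → M, FeasibleD o x σ T} := rfl
    rw [← h3] at h2
    linarith
  · have hx0 : ZD o x = 0 := by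
      unfold ZD
      rw [Set.not_nonempty_iff_eq_empty.mp hS, Real.sInf_empty]
    have hS' : {T : ℝ | ∃ σ : ℝ → M, FeasibleD o xh σ T} = ∅ := by
      rw [Set.eq_empty_iff_forall_notMem]
      rintro T ⟨σ, hσ⟩
      obtain ⟨σ', T', hfeas, -⟩ := key_lemma o hgeo xh x hx σ T hσ
      exact hS ⟨T', σ', hfeas⟩
    have hxh0 : ZD o xh = 0 := by
      unfold ZD
      rw [hS', Real.sInf_empty]
    rw [hx0, hxh0]
    linarith
end

section
/- (Paper's Theorem: with sequence prediction with identity, any 1-consistent algorithm has robustness at least 2.) Let x̂ := ((1/2, 1/2), (1, 1)) and x' := ((1/2, 1/2), (1, 0)) be request sequences of the same length 2 on the real line. Then Z(x̂) = 2 and Z(x') = 1, and for every causal online algorithm ALG: if T_{x̂} ≤ 2 (i.e., ALG achieves the optimal completion time when the actual input coincides with the prediction x̂), then T_{x'} ≥ 2 = 2·Z(x'). Hence every 1-consistent algorithm has competitive ratio at least 2 on the input x'. -/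
/-- Feasibility on the real line (origin `0`): the schedule is 1-Lipschitz, stays at `0`
at all times `≤ 0`, is at `0` at the completion time `T`, and visits each request position
no earlier than its release time. -/
def FeasibleL (x : List (ℝ × ℝ)) (σ : ℝ → ℝ) (T : ℝ) : Prop :=
  (LipschitzWith 1 σ ∧ ∀ s : ℝ, s ≤ 0 → σ s = 0) ∧ 0 ≤ T ∧ σ T = 0 ∧
    ∀ r ∈ x, ∃ s : ℝ, r.1 ≤ s ∧ s ≤ T ∧ σ s = r.2

/-- The optimal offline completion time of a request sequence on the real line. -/
noncomputable def ZL (x : List (ℝ × ℝ)) : ℝ :=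
  sInf {T : ℝ | ∃ σ : ℝ → ℝ, FeasibleL x σ T}

/-- A causal online algorithm on the real line: it assigns to every request sequence a
feasible pair (schedule, completion time), and whenever two request sequences contain
exactly the same requests with release time `≤ τ` (as multisets), the two schedules agree
at all times `≤ τ`. -/
structure OnlineAlg where
  sched : List (ℝ × ℝ) → ℝ → ℝ
  time : List (ℝ × ℝ) → ℝ
  feasible : ∀ x, FeasibleL x (sched x) (time x)
  causal : ∀ (τ : ℝ) (x y : List (ℝ × ℝ)),
    (x.filter fun r => decide (r.1 ≤ τ)).Perm (y.filter fun r => decide (r.1 ≤ τ)) →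
    ∀ s ≤ τ, sched x s = sched y s

lemma lipAbs {σ : ℝ → ℝ} (h : LipschitzWith 1 σ) (a b : ℝ) :
    |σ a - σ b| ≤ |a - b| := by
  have := h.dist_le_mul a b
  simpa [Real.dist_eq] using this

lemma lip_wit (c : ℝ) : LipschitzWith 1 (fun s : ℝ => max 0 (min s (c - s))) := by
  have h1 : LipschitzWith 1 (fun s : ℝ => c - s) := by
    apply LipschitzWith.of_dist_le_mul
    intro x y
    rw [Real.dist_eq, Real.dist_eq]
    have h : c - x - (c - y) = -(x - y) := by ring
    rw [h, abs_neg]; norm_num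
  exact ((LipschitzWith.const 0).max (LipschitzWith.id.min h1)).weaken (by simp)

lemma feas_hat : FeasibleL [((1:ℝ)/2, (1:ℝ)/2), (1,1)]
    (fun s => max 0 (min s (2 - s))) 2 := by
  refine ⟨⟨lip_wit 2, ?_⟩, by norm_num, by norm_num, ?_⟩
  · intro s hs
    have : min s (2 - s) ≤ 0 := le_trans (min_le_left _ _) hs
    simpa using max_eq_left this
  · intro r hr
    simp only [List.mem_cons, List.not_mem_nil, or_false] at hr
    rcases hr with rfl | rfl
    · exact ⟨1/2, by norm_num, by norm_num, by norm_num⟩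
    · exact ⟨1, by norm_num, by norm_num, by norm_num⟩

lemma feas_pr : FeasibleL [((1:ℝ)/2, (1:ℝ)/2), (1,0)]
    (fun s => max 0 (min s (1 - s))) 1 := by
  refine ⟨⟨lip_wit 1, ?_⟩, by norm_num, by norm_num, ?_⟩
  · intro s hs
    have : min s (1 - s) ≤ 0 := le_trans (min_le_left _ _) hs
    simpa using max_eq_left this
  · intro r hr
    simp only [List.mem_cons, List.not_mem_nil, or_false] at hr
    rcases hr with rfl | rfl
    · exact ⟨1/2, by norm_num, by norm_num, by norm_num⟩
    · exact ⟨1, by norm_num, by norm_num, by norm_num⟩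

lemma ZL_hat : ZL [((1:ℝ)/2, (1:ℝ)/2), (1,1)] = 2 := by
  have lb : ∀ T ∈ {T : ℝ | ∃ σ : ℝ → ℝ, FeasibleL [((1:ℝ)/2, (1:ℝ)/2), (1,1)] σ T},
      (2:ℝ) ≤ T := by
    rintro T ⟨σ, ⟨⟨hlip, hzero⟩, hT0, hTend, hreq⟩⟩
    obtain ⟨s, hs1, hsT, hσs⟩ := hreq (1,1) (by simp)
    norm_num at hs1 hσs
    have h0 : σ 0 = 0 := hzero 0 le_rfl
    have h1 := lipAbs hlip s 0
    rw [h0, hσs] at h1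
    have h2 := lipAbs hlip s T
    rw [hσs, hTend] at h2
    have hs0 : (1:ℝ) ≤ s := by
      have := abs_of_nonneg (by linarith : (0:ℝ) ≤ s)
      simp only [sub_zero] at h1
      rw [this] at h1
      simpa using h1
    rw [abs_of_nonpos (by linarith : s - T ≤ 0), neg_sub] at h2
    have : |(1:ℝ) - 0| = 1 := by norm_num
    rw [this] at h2
    linarith
  apply le_antisymm
  · exact csInf_le ⟨2, lb⟩ ⟨_, feas_hat⟩
  · exact le_csInf ⟨2, _, feas_hat⟩ lb

lemma ZL_pr : ZL [((1:ℝ)/2, (1:ℝ)/2), (1,0)] = 1 := by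
  have lb : ∀ T ∈ {T : ℝ | ∃ σ : ℝ → ℝ, FeasibleL [((1:ℝ)/2, (1:ℝ)/2), (1,0)] σ T},
      (1:ℝ) ≤ T := by
    rintro T ⟨σ, ⟨⟨hlip, hzero⟩, hT0, hTend, hreq⟩⟩
    obtain ⟨s, hs1, hsT, hσs⟩ := hreq (1/2, 1/2) (by simp)
    norm_num at hs1 hσs
    have h2 := lipAbs hlip s T
    rw [hσs, hTend] at h2
    rw [abs_of_nonpos (by linarith : s - T ≤ 0), neg_sub] at h2
    have : |(1:ℝ)/2 - 0| = 1/2 := by norm_num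
    rw [this] at h2
    linarith
  apply le_antisymm
  · exact csInf_le ⟨1, lb⟩ ⟨_, feas_pr⟩
  · exact le_csInf ⟨1, _, feas_pr⟩ lb

/-- With a sequence prediction with identity, any 1-consistent algorithm has robustness
at least `2`: on the prediction `x̂ = ((1/2,1/2),(1,1))` the optimum is `2`, on the actual
input `x' = ((1/2,1/2),(1,0))` the optimum is `1`, and any causal online algorithm that
finishes `x̂` by time `2` needs time at least `2 = 2 · Z(x')` on `x'`. -/
theorem one_consistent_robustness_ge_two_with_identity (A : OnlineAlg) :
    ZL [((1 : ℝ) / 2, (1 : ℝ) / 2), (1, 1)] = 2 ∧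
    ZL [((1 : ℝ) / 2, (1 : ℝ) / 2), (1, 0)] = 1 ∧
      (A.time [((1 : ℝ) / 2, (1 : ℝ) / 2), (1, 1)] ≤ 2 →
        2 ≤ A.time [((1 : ℝ) / 2, (1 : ℝ) / 2), (1, 0)] ∧
        2 * ZL [((1 : ℝ) / 2, (1 : ℝ) / 2), (1, 0)] ≤
          A.time [((1 : ℝ) / 2, (1 : ℝ) / 2), (1, 0)]) := by
  refine ⟨ZL_hat, ZL_pr, fun hcons => ?_⟩
  set xh : List (ℝ × ℝ) := [((1:ℝ)/2, (1:ℝ)/2), (1, 1)] with hxh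
  set xp : List (ℝ × ℝ) := [((1:ℝ)/2, (1:ℝ)/2), (1, 0)] with hxp
  obtain ⟨⟨hlipH, hzeroH⟩, hT0H, hTendH, hreqH⟩ := A.feasible xh
  obtain ⟨⟨hlipP, hzeroP⟩, hT0P, hTendP, hreqP⟩ := A.feasible xp
  -- On xh, the schedule is at 1 at time exactly 1
  obtain ⟨s₁, hs11, hs1T, hσs1⟩ := hreqH (1, 1) (by simp [hxh])
  norm_num at hs11 hσs1
  have h0H : A.sched xh 0 = 0 := hzeroH 0 le_rfl
  have hA := lipAbs hlipH s₁ 0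
  rw [h0H, hσs1, sub_zero, sub_zero, abs_of_nonneg (by linarith : (0:ℝ) ≤ s₁)] at hA
  have hB := lipAbs hlipH s₁ (A.time xh)
  rw [hσs1, hTendH, sub_zero, abs_of_nonpos (by linarith : s₁ - A.time xh ≤ 0), neg_sub] at hB
  have hs1eq : s₁ = 1 := by
    have : |(1:ℝ)| = 1 := by norm_num
    rw [this] at hA hB
    linarith
  rw [hs1eq] at hσs1
  -- On xh, the schedule equals id on [0,1]
  have hid : ∀ s : ℝ, 0 ≤ s → s ≤ 1 → A.sched xh s = s := by
    intro s h0 h1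
    have hu := lipAbs hlipH s 0
    rw [h0H, sub_zero, sub_zero, abs_of_nonneg h0] at hu
    have hl := lipAbs hlipH s 1
    rw [hσs1, abs_of_nonpos (by linarith : s - 1 ≤ 0), neg_sub] at hl
    have := abs_le.mp hu
    have := abs_le.mp hl
    linarith [(abs_le.mp hu).1, (abs_le.mp hu).2, (abs_le.mp hl).1, (abs_le.mp hl).2]
  -- causality: schedules agree before time 1
  have hc : ∀ s : ℝ, s < 1 → A.sched xp s = A.sched xh s := by
    intro s hs
    apply A.causal s xp xh _ s le_rfl
    have hd : decide ((1:ℝ) ≤ s) = false := decide_eq_false (by linarith)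
    simp [hxh, hxp, List.filter, hd]
  -- hence sched xp 1 = 1
  have hP1 : A.sched xp 1 = 1 := by
    have hub := lipAbs hlipP 1 0
    rw [hzeroP 0 le_rfl, sub_zero, sub_zero] at hub
    have hub' := (abs_le.mp (by simpa using hub)).2
    have hlbb := (abs_le.mp (by simpa using hub)).1
    refine le_antisymm hub' ?_
    by_contra hne
    push_neg at hne
    have hs0 : (0:ℝ) ≤ (A.sched xp 1 + 3)/4 := by linarith
    have hs1 : (A.sched xp 1 + 3)/4 < 1 := by linarith
    have hval : A.sched xp ((A.sched xp 1 + 3)/4) = (A.sched xp 1 + 3)/4 := by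
      rw [hc _ hs1]; exact hid _ hs0 hs1.le
    have hl := lipAbs hlipP 1 ((A.sched xp 1 + 3)/4)
    have hr : |1 - (A.sched xp 1 + 3)/4| = 1 - (A.sched xp 1 + 3)/4 :=
      abs_of_nonneg (by linarith)
    rw [hval, hr] at hl
    have := (abs_le.mp hl).1
    linarith
  -- conclude: request (1,0) forces time ≥ 2
  obtain ⟨s₂, hs21, hs2T, hσs2⟩ := hreqP (1, 0) (by simp [hxp])
  norm_num at hs21 hσs2
  have h2 := lipAbs hlipP 1 s₂
  rw [hP1, hσs2, sub_zero, abs_of_nonpos (by linarith : (1:ℝ) - s₂ ≤ 0), neg_sub] at h2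
  have hfin : (2:ℝ) ≤ A.time xp := by norm_num at h2; linarith
  exact ⟨hfin, by rw [show ZL xp = 1 from ZL_pr]; linarith⟩
end
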